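/- Let (X,d) be a metric space and m : X×X → X a convex midpoint map for (X,d). Let C_m denote the set of nonempty closed bounded m-convex subsets of X, endowed with the Hausdorff metric d_H. Then the map M : C_m × C_m → C_m defined by M(A,A') := conv_m({ x ∈ X | ∃ a ∈ A, a' ∈ A' with x = m(a,a') }) is a convex midpoint map for (C_m, d_H); that is, d_H(M(A,A'),A) = d_H(A,A')/2 = d_H(M(A,A'),A') for all A,A' ∈ C_m, M is symmetric, and d_H(M(A₁,A₁'),M(A₂,A₂')) ≤ (d_H(A₁,A₂)+d_H(A₁',A₂'))/2 for all A₁,A₂,A₁',A₂' ∈ C_m. -/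
import Mathlib


open Metric Set TopologicalSpace

variable {X : Type*}

/-- A geodesic segment from `x` to `y`, parametrized by arclength on `[0, dist x y]`. -/
def IsGeodesicSegment [MetricSpace X] (γ : ℝ → X) (x y : X) : Prop :=
  γ 0 = x ∧ γ (dist x y) = y ∧
    ∀ s ∈ Set.Icc (0 : ℝ) (dist x y), ∀ t ∈ Set.Icc (0 : ℝ) (dist x y),
      dist (γ s) (γ t) = |s - t|

/-- A metric space is geodesic if any two points are joined by a geodesic segment. -/
def IsGeodesicSpace (X : Type*) [MetricSpace X] : Prop :=
  ∀ x y : X, ∃ γ : ℝ → X, IsGeodesicSegment γ x y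

/-- A metric space is uniquely geodesic if any two points are joined by a geodesic
segment, which is moreover unique (as a parametrized segment). -/
def IsUniquelyGeodesic (X : Type*) [MetricSpace X] : Prop :=
  ∀ x y : X, (∃ γ : ℝ → X, IsGeodesicSegment γ x y) ∧
    ∀ γ γ' : ℝ → X, IsGeodesicSegment γ x y → IsGeodesicSegment γ' x y →
      ∀ t ∈ Set.Icc (0 : ℝ) (dist x y), γ t = γ' t

/-- Geodesic completeness: every geodesic segment extends to a full geodesic line,
i.e. an isometric embedding of `ℝ`. -/
def IsGeodesicallyComplete (X : Type*) [MetricSpace X] : Prop :=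
  ∀ (x y : X) (γ : ℝ → X), IsGeodesicSegment γ x y →
    ∃ γ' : ℝ → X, Isometry γ' ∧ γ '' Set.Icc (0 : ℝ) (dist x y) ⊆ Set.range γ'

/-- Geodesics do not split: the image of the bi-infinite geodesic extension of every
nondegenerate geodesic segment is unique. -/
def GeodesicsDoNotSplit (X : Type*) [MetricSpace X] : Prop :=
  ∀ (x y : X) (γ : ℝ → X), IsGeodesicSegment γ x y → x ≠ y →
    ∀ γ₁ γ₂ : ℝ → X, Isometry γ₁ → Isometry γ₂ →
      γ '' Set.Icc (0 : ℝ) (dist x y) ⊆ Set.range γ₁ →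
      γ '' Set.Icc (0 : ℝ) (dist x y) ⊆ Set.range γ₂ →
      Set.range γ₁ = Set.range γ₂

/-- A subset is (geodesically) convex if with any two of its points it contains
the image of every geodesic segment joining them. -/
def IsGeodConvex [MetricSpace X] (C : Set X) : Prop :=
  ∀ a ∈ C, ∀ b ∈ C, ∀ γ : ℝ → X, IsGeodesicSegment γ a b →
    γ '' Set.Icc (0 : ℝ) (dist a b) ⊆ C

/-- A midpoint map on a metric space: a symmetric map `m` with
`d(m(x,y),x) = d(x,y)/2 = d(m(x,y),y)`. -/
def IsMidpointMap [MetricSpace X] (m : X → X → X) : Prop :=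
  (∀ x y, m x y = m y x) ∧
    ∀ x y, dist (m x y) x = dist x y / 2 ∧ dist (m x y) y = dist x y / 2

/-- A convex midpoint map:
`d(m(x₁,y₁), m(x₂,y₂)) ≤ (d(x₁,x₂) + d(y₁,y₂))/2` for all points. -/
def IsConvexMidpointMap [MetricSpace X] (m : X → X → X) : Prop :=
  IsMidpointMap m ∧
    ∀ x₁ x₂ y₁ y₂ : X, dist (m x₁ y₁) (m x₂ y₂) ≤ (dist x₁ x₂ + dist y₁ y₂) / 2

/-- The space `𝒞(X,d)` of nonempty convex compact subsets of `X`, endowed with the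
Hausdorff metric (as a subtype of `NonemptyCompacts X`, whose metric is the
Hausdorff distance). -/
abbrev ConvexCompacts (X : Type*) [MetricSpace X] :=
  {A : NonemptyCompacts X // IsGeodConvex (A : Set X)}

lemma isGeodConvex_singleton [MetricSpace X] (p : X) : IsGeodConvex ({p} : Set X) := by
  rintro a ha b hb γ hγ x ⟨t, ht, rfl⟩
  rw [Set.mem_singleton_iff] at ha hb
  subst ha; subst hb
  rw [dist_self] at ht
  have : t = 0 := le_antisymm ht.2 ht.1
  subst this
  exact hγ.1

/-- The singleton `{p}` as an element of `𝒞(X,d)`. -/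
def singletonCC [MetricSpace X] (p : X) : ConvexCompacts X :=
  ⟨⟨⟨{p}, isCompact_singleton⟩, Set.singleton_nonempty p⟩, isGeodConvex_singleton p⟩

/-- The singleton `{p}` as an element of `𝔉(X,d)`, the space of nonempty compact
subsets of `X` with the Hausdorff metric. -/
def singletonNC [MetricSpace X] (p : X) : NonemptyCompacts X :=
  ⟨⟨{p}, isCompact_singleton⟩, Set.singleton_nonempty p⟩

/-- The closed `r`-neighborhood `N_r(A) = {x | ∃ a ∈ A, d(a,x) ≤ r}` of a set. -/
def closedNbhd [MetricSpace X] (r : ℝ) (A : Set X) : Set X :=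
  {x : X | ∃ a ∈ A, dist a x ≤ r}

/-- A set is `m`-convex if it contains the `m`-midpoint of each pair of its points. -/
def MConvexSet [MetricSpace X] (m : X → X → X) (A : Set X) : Prop :=
  ∀ a ∈ A, ∀ a' ∈ A, m a a' ∈ A

/-- The `m`-convex hull: the intersection of all closed `m`-convex sets containing `A`. -/
def mConvexHull [MetricSpace X] (m : X → X → X) (A : Set X) : Set X :=
  ⋂₀ {C : Set X | IsClosed C ∧ MConvexSet m C ∧ A ⊆ C}

lemma le_add_eps {a b : ℝ} (h : ∀ ε > (0:ℝ), a ≤ b + ε) : a ≤ b := by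
  by_contra hc
  push_neg at hc
  have := h ((a - b)/2) (by linarith)
  linarith

lemma subset_mConvexHull' [MetricSpace X] (m : X → X → X) (A : Set X) :
    A ⊆ mConvexHull m A := fun x hx => Set.mem_sInter.2 fun _ hC => hC.2.2 hx

lemma mConvexHull_subset' [MetricSpace X] (m : X → X → X) {A C : Set X}
    (h1 : IsClosed C) (h2 : MConvexSet m C) (h3 : A ⊆ C) : mConvexHull m A ⊆ C :=
  Set.sInter_subset_of_mem ⟨h1, h2, h3⟩

lemma isClosed_mConvexHull' [MetricSpace X] (m : X → X → X) (A : Set X) :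
    IsClosed (mConvexHull m A) :=
  isClosed_sInter fun _ hC => hC.1

lemma mConvexSet_mConvexHull' [MetricSpace X] (m : X → X → X) (A : Set X) :
    MConvexSet m (mConvexHull m A) := by
  intro a ha a' ha'
  rw [mConvexHull, Set.mem_sInter] at *
  exact fun C hC => hC.2.1 a (ha C hC) a' (ha' C hC)

/-- The `r`-infDist-neighborhood of an `m`-convex set is closed and `m`-convex. -/
lemma mConvexSet_infDist_le [MetricSpace X] {m : X → X → X}
    (hconv : IsConvexMidpointMap m) {T : Set X} (hT : MConvexSet m T)
    (hTne : T.Nonempty) (r : ℝ) :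
    MConvexSet m {x : X | infDist x T ≤ r} := by
  intro x hx x' hx'
  simp only [Set.mem_setOf_eq] at *
  apply le_add_eps
  intro ε hε
  obtain ⟨a, haT, ha⟩ := (infDist_lt_iff hTne).1 (lt_of_le_of_lt hx (by linarith : r < r + ε))
  obtain ⟨a', ha'T, ha'⟩ := (infDist_lt_iff hTne).1 (lt_of_le_of_lt hx' (by linarith : r < r + ε))
  have hmem : m a a' ∈ T := hT a haT a' ha'T
  calc infDist (m x x') T ≤ dist (m x x') (m a a') := infDist_le_dist_of_mem hmem
    _ ≤ (dist x a + dist x' a') / 2 := hconv.2 x a x' a'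
    _ ≤ r + ε := by linarith

lemma isClosed_infDist_le [MetricSpace X] (T : Set X) (r : ℝ) :
    IsClosed {x : X | infDist x T ≤ r} :=
  isClosed_le (continuous_infDist_pt T) continuous_const

/-- Points of the `m`-convex hull of `S` stay within `r` of `T` if the points of `S` do. -/
lemma mConvexHull_infDist_le [MetricSpace X] {m : X → X → X}
    (hconv : IsConvexMidpointMap m) {S T : Set X} (hT : MConvexSet m T)
    (hTne : T.Nonempty) {r : ℝ} (hS : ∀ x ∈ S, infDist x T ≤ r) :
    ∀ x ∈ mConvexHull m S, infDist x T ≤ r := fun x hx =>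
  mConvexHull_subset' m (isClosed_infDist_le T r)
    (mConvexSet_infDist_le hconv hT hTne r) hS hx

/-- **Proposition 2.9.** For a convex midpoint map `m` on `(X,d)`, the map
`M(A,A') := conv_m {m(a,a') | a ∈ A, a' ∈ A'}` is a convex midpoint map on the set
`𝒞_m` of nonempty closed bounded `m`-convex subsets of `X`, with respect to the
Hausdorff distance. -/
theorem M_convexMidpointMap_on_Cm [MetricSpace X] (m : X → X → X)
    (hconv : IsConvexMidpointMap m) :
    let Cm : Set (Set X) :=
      {A | A.Nonempty ∧ IsClosed A ∧ Bornology.IsBounded A ∧ MConvexSet m A}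
    let M : Set X → Set X → Set X := fun A A' =>
      mConvexHull m {x : X | ∃ a ∈ A, ∃ a' ∈ A', x = m a a'}
    (∀ A ∈ Cm, ∀ A' ∈ Cm, M A A' ∈ Cm) ∧
    (∀ A ∈ Cm, ∀ A' ∈ Cm, M A A' = M A' A) ∧
    (∀ A ∈ Cm, ∀ A' ∈ Cm,
      hausdorffDist (M A A') A = hausdorffDist A A' / 2 ∧
      hausdorffDist (M A A') A' = hausdorffDist A A' / 2) ∧
    (∀ A₁ ∈ Cm, ∀ A₂ ∈ Cm, ∀ A₁' ∈ Cm, ∀ A₂' ∈ Cm,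
      hausdorffDist (M A₁ A₁') (M A₂ A₂') ≤
        (hausdorffDist A₁ A₂ + hausdorffDist A₁' A₂') / 2) := by
  intro Cm M
  have hsym := hconv.1.1
  have hdist := hconv.1.2
  have hSsub : ∀ A A' : Set X, {x : X | ∃ a ∈ A, ∃ a' ∈ A', x = m a a'} ⊆ M A A' :=
    fun A A' => subset_mConvexHull' m _
  have hMne : ∀ A ∈ Cm, ∀ A' ∈ Cm, (M A A').Nonempty := by
    intro A hA A' hA'
    obtain ⟨a, ha⟩ := hA.1
    obtain ⟨a', ha'⟩ := hA'.1
    exact ⟨m a a', hSsub A A' ⟨a, ha, a', ha', rfl⟩⟩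
  have hfin : ∀ A ∈ Cm, ∀ B ∈ Cm, EMetric.hausdorffEdist A B ≠ ⊤ := fun A hA B hB =>
    hausdorffEdist_ne_top_of_nonempty_of_bounded hA.1 hB.1 hA.2.2.1 hB.2.2.1
  have hMmem : ∀ A ∈ Cm, ∀ A' ∈ Cm, M A A' ∈ Cm := by
    intro A hA A' hA'
    refine ⟨hMne A hA A' hA', isClosed_mConvexHull' m _, ?_, mConvexSet_mConvexHull' m _⟩
    obtain ⟨x0, hx0⟩ := hA.1
    obtain ⟨R, hR⟩ := (hA.2.2.1.union hA'.2.2.1).subset_closedBall x0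
    have hMsub : M A A' ⊆ {x | infDist x A ≤ R} := by
      apply mConvexHull_subset' m (isClosed_infDist_le A R)
        (mConvexSet_infDist_le hconv hA.2.2.2 hA.1 R)
      rintro x ⟨a, ha, a', ha', rfl⟩
      have h1 : dist a x0 ≤ R := hR (Set.mem_union_left _ ha)
      have h2 : dist a' x0 ≤ R := hR (Set.mem_union_right _ ha')
      calc infDist (m a a') A ≤ dist (m a a') a := infDist_le_dist_of_mem ha
        _ = dist a a' / 2 := (hdist a a').1
        _ ≤ R := by have := dist_triangle_right a a' x0; linarith
    have hDsub : {x : X | infDist x A ≤ R} ⊆ closedBall x0 (2*R+1) := by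
      intro x hx
      obtain ⟨a, haA, ha⟩ := (infDist_lt_iff hA.1).1
        (lt_of_le_of_lt hx (by linarith : R < R + 1))
      have h1 : dist a x0 ≤ R := hR (Set.mem_union_left _ haA)
      have : dist x x0 ≤ dist x a + dist a x0 := dist_triangle _ _ _
      simp only [Metric.mem_closedBall]
      linarith
    exact Metric.isBounded_closedBall.subset (hMsub.trans hDsub)
  have hMsymm : ∀ A A' : Set X, M A A' = M A' A := by
    intro A A'
    have hSeq : {x : X | ∃ a ∈ A, ∃ a' ∈ A', x = m a a'}
        = {x : X | ∃ a ∈ A', ∃ a' ∈ A, x = m a a'} := by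
      ext x
      constructor <;> rintro ⟨a, ha, a', ha', rfl⟩ <;>
        exact ⟨a', ha', a, ha, hsym a a'⟩
    show mConvexHull m _ = mConvexHull m _
    rw [hSeq]
  have key : ∀ A ∈ Cm, ∀ A' ∈ Cm,
      hausdorffDist (M A A') A ≤ hausdorffDist A A' / 2 := by
    intro A hA A' hA'
    apply hausdorffDist_le_of_infDist
      (div_nonneg hausdorffDist_nonneg (by norm_num))
    · apply mConvexHull_infDist_le hconv hA.2.2.2 hA.1
      rintro x ⟨a, ha, a', ha', rfl⟩
      apply le_add_eps
      intro ε hε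
      have hlt : hausdorffDist A' A < hausdorffDist A A' + 2*ε := by
        rw [hausdorffDist_comm]; linarith
      obtain ⟨b, hbA, hb⟩ := exists_dist_lt_of_hausdorffDist_lt ha' hlt
        (by rw [EMetric.hausdorffEdist_comm]; exact hfin A hA A' hA')
      have hmem : m a b ∈ A := hA.2.2.2 a ha b hbA
      have hda : dist a a = 0 := dist_self a
      calc infDist (m a a') A ≤ dist (m a a') (m a b) := infDist_le_dist_of_mem hmem
        _ ≤ (dist a a + dist a' b) / 2 := hconv.2 a a a' b
        _ ≤ hausdorffDist A A' / 2 + ε := by rw [hda]; linarith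
    · intro a haA
      apply le_add_eps
      intro ε hε
      obtain ⟨a', ha'A, ha'⟩ := exists_dist_lt_of_hausdorffDist_lt haA
        (by linarith : hausdorffDist A A' < hausdorffDist A A' + 2*ε) (hfin A hA A' hA')
      have hmem : m a a' ∈ M A A' := hSsub A A' ⟨a, haA, a', ha'A, rfl⟩
      calc infDist a (M A A') ≤ dist a (m a a') := infDist_le_dist_of_mem hmem
        _ = dist a a' / 2 := by rw [dist_comm]; exact (hdist a a').1
        _ ≤ hausdorffDist A A' / 2 + ε := by linarith
  refine ⟨hMmem, fun A _ A' _ => hMsymm A A', ?_, ?_⟩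
  · intro A hA A' hA'
    have h1 := key A hA A' hA'
    have h2 := key A' hA' A hA
    rw [hMsymm A' A, hausdorffDist_comm (s := A') (t := A)] at h2
    have hMc := hMmem A hA A' hA'
    have htri : hausdorffDist A A' ≤ hausdorffDist A (M A A') + hausdorffDist (M A A') A' :=
      hausdorffDist_triangle (hfin A hA _ hMc)
    rw [hausdorffDist_comm (s := A) (t := M A A')] at htri
    constructor <;> linarith
  · intro A₁ h1 A₂ h2 A₁' h1' A₂' h2'
    have hr : (0:ℝ) ≤ (hausdorffDist A₁ A₂ + hausdorffDist A₁' A₂') / 2 :=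
      div_nonneg (add_nonneg hausdorffDist_nonneg hausdorffDist_nonneg) (by norm_num)
    have side : ∀ B₁ ∈ Cm, ∀ B₂ ∈ Cm, ∀ B₁' ∈ Cm, ∀ B₂' ∈ Cm,
        ∀ x ∈ M B₁ B₁', infDist x (M B₂ B₂')
          ≤ (hausdorffDist B₁ B₂ + hausdorffDist B₁' B₂') / 2 := by
      intro B₁ hB₁ B₂ hB₂ B₁' hB₁' B₂' hB₂'
      have hM₂ := hMmem B₂ hB₂ B₂' hB₂'
      apply mConvexHull_infDist_le hconv hM₂.2.2.2 hM₂.1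
      rintro x ⟨a, ha, a', ha', rfl⟩
      apply le_add_eps
      intro ε hε
      obtain ⟨b, hb, hab⟩ := exists_dist_lt_of_hausdorffDist_lt ha
        (by linarith : hausdorffDist B₁ B₂ < hausdorffDist B₁ B₂ + ε) (hfin B₁ hB₁ B₂ hB₂)
      obtain ⟨b', hb', hab'⟩ := exists_dist_lt_of_hausdorffDist_lt ha'
        (by linarith : hausdorffDist B₁' B₂' < hausdorffDist B₁' B₂' + ε)
        (hfin B₁' hB₁' B₂' hB₂')
      have hmem : m b b' ∈ M B₂ B₂' := hSsub B₂ B₂' ⟨b, hb, b', hb', rfl⟩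
      calc infDist (m a a') (M B₂ B₂') ≤ dist (m a a') (m b b') :=
            infDist_le_dist_of_mem hmem
        _ ≤ (dist a b + dist a' b') / 2 := hconv.2 a b a' b'
        _ ≤ (hausdorffDist B₁ B₂ + hausdorffDist B₁' B₂') / 2 + ε := by linarith
    refine hausdorffDist_le_of_infDist hr (side A₁ h1 A₂ h2 A₁' h1' A₂' h2') ?_
    intro x hx
    have h := side A₂ h2 A₁ h1 A₂' h2' A₁' h1' x hx
    rwa [hausdorffDist_comm (s := A₂) (t := A₁), hausdorffDist_comm (s := A₂') (t := A₁')] at h
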